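/- arXiv:2512.24961 — 4 statements merged into one kernel-verified Lean document; each statement's English description precedes it below -/
import Mathlib

section
/- Let G be a finite connected simple graph with at least two vertices, and let x and y be distinct vertices of G. Then the Ollivier–Ricci curvature κ(x,y) equals 1 if and only if x and y are structurally equivalent, i.e. they have exactly the same neighbourhoods in G. -/
/-!
STATEMENT 2: Let G be a finite connected simple graph with at least two vertices,
and let x and y be distinct vertices of G. Then the Ollivier–Ricci curvature
κ(x,y) equals 1 if and only if x and y are structurally equivalent, i.e. they
have exactly the same neighbourhoods in G.
-/

open Finset

variable {V : Type*}

/-- A coupling of two measures `μ` and `ν` on a finite vertex set. -/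
def IsCoupling [Fintype V] (μ ν : V → ℝ) (ξ : V → V → ℝ) : Prop :=
  (∀ u v, 0 ≤ ξ u v) ∧ (∀ u, ∑ v, ξ u v = μ u) ∧ (∀ v, ∑ u, ξ u v = ν v)

/-- The 1-Wasserstein distance between `μ` and `ν` with respect to the
distance function `d`: the infimum over couplings of the transport cost. -/
noncomputable def W1 [Fintype V] (d : V → V → ℝ) (μ ν : V → ℝ) : ℝ :=
  sInf {c | ∃ ξ : V → V → ℝ, IsCoupling μ ν ξ ∧ c = ∑ u, ∑ v, d u v * ξ u v}

/-- The neighbour measure of a vertex `x`: mass `1/deg(x)` on each neighbour. -/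
noncomputable def nbrMeasure [Fintype V] (G : SimpleGraph V) [DecidableRel G.Adj]
    (x : V) : V → ℝ :=
  fun z => if G.Adj x z then 1 / (G.degree x : ℝ) else 0

/-- The Ollivier–Ricci curvature of a pair of vertices, computed with the
shortest-path distance of `G`. -/
noncomputable def orc [Fintype V] (G : SimpleGraph V) [DecidableRel G.Adj]
    (x y : V) : ℝ :=
  1 - W1 (fun u v => (G.dist u v : ℝ)) (nbrMeasure G x) (nbrMeasure G y) / (G.dist x y)

/-!
Curvature one means `W₁(μ_x, μ_y) = 0`. Since distinct vertices are at distance at least one,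
weak Kantorovich duality applied to the test functions `±𝟙_{w}` bounds `|μ_x w - μ_y w|` by
`W₁(μ_x, μ_y)`, so `W₁ = 0` forces `μ_x = μ_y`; conversely the diagonal coupling of a measure
with itself costs nothing. Finally `μ_x = μ_y` says exactly that `x` and `y` have the same
neighbours, because the support of `μ_x` is the neighbourhood of `x`.
-/

section Transport

variable [Fintype V] {μ ν : V → ℝ} {ξ : V → V → ℝ} {d : V → V → ℝ}

lemma IsCoupling.product (hμ : ∀ z, 0 ≤ μ z) (hν : ∀ z, 0 ≤ ν z)
    (hμ1 : ∑ z, μ z = 1) (hν1 : ∑ z, ν z = 1) :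
    IsCoupling μ ν (fun u v => μ u * ν v) :=
  ⟨fun u v => mul_nonneg (hμ u) (hν v),
    fun u => by rw [← mul_sum, hν1, mul_one],
    fun v => by rw [← sum_mul, hμ1, one_mul]⟩

lemma IsCoupling.diagonal [DecidableEq V] (hμ : ∀ z, 0 ≤ μ z) :
    IsCoupling μ μ (fun u v => if u = v then μ u else 0) :=
  ⟨fun u v => ite_nonneg (hμ u) le_rfl, fun u => by simp, fun v => by simp⟩

lemma IsCoupling.sub_le_cost (hξ : IsCoupling μ ν ξ) {f : V → ℝ}
    (hf : ∀ u v, f u - f v ≤ d u v) :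
    ∑ u, f u * μ u - ∑ v, f v * ν v ≤ ∑ u, ∑ v, d u v * ξ u v := by
  obtain ⟨hξ0, hrow, hcol⟩ := hξ
  calc ∑ u, f u * μ u - ∑ v, f v * ν v
      = ∑ u, ∑ v, (f u - f v) * ξ u v := by
        simp only [← hrow, ← hcol, mul_sum, sub_mul, sum_sub_distrib]
        rw [sum_comm (f := fun u v => f v * ξ u v)]
    _ ≤ ∑ u, ∑ v, d u v * ξ u v := by
        gcongr with u _ v _
        · exact hξ0 u v
        · exact hf u v

lemma sub_le_W1 (hne : ∃ ξ, IsCoupling μ ν ξ) {f : V → ℝ} (hf : ∀ u v, f u - f v ≤ d u v) :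
    ∑ u, f u * μ u - ∑ v, f v * ν v ≤ W1 d μ ν := by
  obtain ⟨ξ, hξ⟩ := hne
  exact le_csInf ⟨_, ξ, hξ, rfl⟩ fun _ ⟨_, hξ', hc⟩ => hc ▸ hξ'.sub_le_cost hf

lemma zero_mem_lowerBounds_couplingCosts (hd : ∀ u v, 0 ≤ d u v) :
    0 ∈ lowerBounds {c | ∃ ξ, IsCoupling μ ν ξ ∧ c = ∑ u, ∑ v, d u v * ξ u v} :=
  fun _ ⟨_, hξ, hc⟩ =>
    hc ▸ sum_nonneg fun u _ => sum_nonneg fun v _ => mul_nonneg (hd u v) (hξ.1 u v)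

lemma W1_nonneg (hd : ∀ u v, 0 ≤ d u v) : 0 ≤ W1 d μ ν :=
  Real.sInf_nonneg (zero_mem_lowerBounds_couplingCosts hd)

lemma W1_self (hd : ∀ u v, 0 ≤ d u v) (hdiag : ∀ u, d u u = 0) (hμ : ∀ z, 0 ≤ μ z) :
    W1 d μ μ = 0 := by
  classical
  refine le_antisymm ?_ (W1_nonneg hd)
  refine csInf_le ⟨0, zero_mem_lowerBounds_couplingCosts hd⟩ ⟨_, IsCoupling.diagonal hμ, ?_⟩
  simp [hdiag]

lemma W1_eq_zero_iff (hdiag : ∀ u, d u u = 0) (hsep : ∀ u v, u ≠ v → 1 ≤ d u v)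
    (hμ : ∀ z, 0 ≤ μ z) (hν : ∀ z, 0 ≤ ν z) (hμ1 : ∑ z, μ z = 1) (hν1 : ∑ z, ν z = 1) :
    W1 d μ ν = 0 ↔ μ = ν := by
  classical
  have hd : ∀ u v, 0 ≤ d u v := fun u v => by
    rcases eq_or_ne u v with rfl | huv
    · exact (hdiag u).ge
    · exact zero_le_one.trans (hsep u v huv)
  refine ⟨fun h0 => funext fun w => ?_, fun h => h ▸ W1_self hd hdiag hμ⟩
  have hne : ∃ ξ, IsCoupling μ ν ξ := ⟨_, IsCoupling.product hμ hν hμ1 hν1⟩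
  have hlip : ∀ s : ℝ, |s| ≤ 1 → ∀ u v,
      (fun z => if z = w then s else 0) u - (fun z => if z = w then s else 0) v ≤ d u v := by
    intro s hs u v
    rcases eq_or_ne u v with rfl | huv
    · simp [hdiag]
    · refine le_trans ?_ (hsep u v huv)
      have := abs_le.mp hs
      dsimp only
      split_ifs <;> linarith
  have hup := sub_le_W1 hne (hlip 1 (by norm_num))
  have hdown := sub_le_W1 hne (hlip (-1) (by norm_num))
  simp only [ite_mul, zero_mul, sum_ite_eq', mem_univ, if_true] at hup hdown
  linarith

end Transport

section NeighbourMeasure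

variable [Fintype V] (G : SimpleGraph V) [DecidableRel G.Adj]

lemma nbrMeasure_nonneg (x z : V) : 0 ≤ nbrMeasure G x z := by
  unfold nbrMeasure; positivity

lemma nbrMeasure_ne_zero_iff {x z : V} : nbrMeasure G x z ≠ 0 ↔ G.Adj x z := by
  by_cases h : G.Adj x z
  · simp [nbrMeasure, h, h.degree_pos_left.ne']
  · simp [nbrMeasure, h]

lemma sum_nbrMeasure {x : V} (hx : 0 < G.degree x) : ∑ z, nbrMeasure G x z = 1 := by
  simp [nbrMeasure, sum_ite, ← SimpleGraph.neighborFinset_eq_filter, hx.ne']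

lemma nbrMeasure_eq_iff {x y : V} :
    nbrMeasure G x = nbrMeasure G y ↔ ∀ c, G.Adj x c ↔ G.Adj y c := by
  refine ⟨fun h c => ?_, fun h => ?_⟩
  · rw [← nbrMeasure_ne_zero_iff, ← nbrMeasure_ne_zero_iff, h]
  · have hN : G.neighborFinset x = G.neighborFinset y := by ext c; simp [h c]
    funext c
    simp [nbrMeasure, h c, ← SimpleGraph.card_neighborFinset_eq_degree, hN]

end NeighbourMeasure

theorem stmt2_general [Fintype V] (G : SimpleGraph V) [DecidableRel G.Adj]
    (hconn : G.Connected)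
    (x y : V) (hxy : x ≠ y) :
    orc G x y = 1 ↔ (∀ c, G.Adj x c ↔ G.Adj y c) := by
  have hdist : (G.dist x y : ℝ) ≠ 0 := by exact_mod_cast (hconn.pos_dist_of_ne hxy).ne'
  have hW1 := W1_eq_zero_iff (d := fun u v => (G.dist u v : ℝ)) (by simp)
    (fun u v huv => by exact_mod_cast hconn.pos_dist_of_ne huv)
    (nbrMeasure_nonneg G x) (nbrMeasure_nonneg G y)
    (sum_nbrMeasure G ((hconn x y).degree_pos_left hxy))
    (sum_nbrMeasure G ((hconn y x).degree_pos_left hxy.symm))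
  rw [orc, sub_eq_self, div_eq_zero_iff, or_iff_left hdist, hW1, nbrMeasure_eq_iff]

theorem stmt2 [Fintype V] (G : SimpleGraph V) [DecidableRel G.Adj]
    (hconn : G.Connected) (hcard : 2 ≤ Fintype.card V)
    (x y : V) (hxy : x ≠ y) :
    orc G x y = 1 ↔ (∀ c, G.Adj x c ↔ G.Adj y c) :=
  stmt2_general G hconn x y hxy
end

section
/- Let G be a finite simple graph. The partition of the vertex set V whose blocks are the vertex sets of the connected components of the 2nd neighbourhood graph G_2 is a regular partition of G. -/
/-!
STATEMENT 4: Let G be a finite simple graph. The partition of the vertex set V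
whose blocks are the vertex sets of the connected components of the 2nd
neighbourhood graph G_2 is a regular partition of G.

Two vertices lie in the same block of this partition iff they are reachable
from one another in G_2, so regularity says: whenever a and b are reachable in
G_2 and {a,c} is an edge of G, there is a vertex d with {b,d} an edge of G and
c, d reachable in G_2.
-/

variable {V : Type*}

/-- The `n`-th neighbourhood graph of a simple graph `G`. -/
def nbhdGraph (G : SimpleGraph V) (n : ℕ) : SimpleGraph V where
  Adj u v := u ≠ v ∧ ∃ p : G.Walk u v, p.IsPath ∧ p.length = n
  symm := by
    refine ⟨?_⟩
    rintro u v ⟨huv, p, hp, hl⟩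
    exact ⟨huv.symm, p.reverse, hp.reverse, by simpa using hl⟩
  loopless := by
    refine ⟨?_⟩
    rintro v ⟨h, -⟩
    exact h rfl

/-!
If `a` and `b` are at distance two via `x`, any neighbour `c` of `a` is matched by the
neighbour `x` of `b`: either `c = x`, or `c - a - x` is a path of length two. Regularity of the
partition then propagates along walks in `G_2`.
-/

namespace SimpleGraph

variable {G H : SimpleGraph V}

theorem nbhdGraph_two_adj_iff {u w : V} :
    (nbhdGraph G 2).Adj u w ↔ u ≠ w ∧ ∃ v, G.Adj u v ∧ G.Adj v w := by
  constructor
  · rintro ⟨huw, p, -, hp⟩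
    let v := G.walkLengthTwoEquivCommonNeighbors u w ⟨p, hp⟩
    obtain ⟨huv, hwv⟩ := (G.mem_commonNeighbors).1 v.prop
    exact ⟨huw, v, huv, hwv.symm⟩
  · rintro ⟨huw, v, huv, hvw⟩
    refine ⟨huw, .cons huv (.cons hvw .nil), ?_, rfl⟩
    simp [Walk.isPath_def, huv.ne, hvw.ne, huw]

theorem exists_adj_reachable_of_nbhdGraph_two_adj {a b c : V}
    (hab : (nbhdGraph G 2).Adj a b) (hac : G.Adj a c) :
    ∃ d, G.Adj b d ∧ (nbhdGraph G 2).Reachable c d := by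
  obtain ⟨-, x, hax, hxb⟩ := nbhdGraph_two_adj_iff.1 hab
  refine ⟨x, hxb.symm, ?_⟩
  by_cases hcx : c = x
  · exact hcx ▸ .refl c
  · exact (nbhdGraph_two_adj_iff.2 ⟨hcx, a, hac.symm, hax⟩).reachable

theorem exists_adj_reachable_of_reachable
    (hstep : ∀ {a b c}, H.Adj a b → G.Adj a c → ∃ d, G.Adj b d ∧ H.Reachable c d)
    {a b c : V} (hab : H.Reachable a b) (hac : G.Adj a c) :
    ∃ d, G.Adj b d ∧ H.Reachable c d := by
  obtain ⟨p⟩ := hab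
  induction p generalizing c with
  | nil => exact ⟨c, hac, .refl c⟩
  | cons hax _ ih =>
    obtain ⟨y, hxy, hcy⟩ := hstep hax hac
    obtain ⟨d, hbd, hyd⟩ := ih hxy
    exact ⟨d, hbd, hcy.trans hyd⟩

end SimpleGraph

theorem stmt4_general (G : SimpleGraph V)
    (a b : V) (hab : (nbhdGraph G 2).Reachable a b)
    (c : V) (hac : G.Adj a c) :
    ∃ d, G.Adj b d ∧ (nbhdGraph G 2).Reachable c d :=
  SimpleGraph.exists_adj_reachable_of_reachable
    SimpleGraph.exists_adj_reachable_of_nbhdGraph_two_adj hab hac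

theorem stmt4 [Fintype V] (G : SimpleGraph V)
    (a b : V) (hab : (nbhdGraph G 2).Reachable a b)
    (c : V) (hac : G.Adj a c) :
    ∃ d, G.Adj b d ∧ (nbhdGraph G 2).Reachable c d :=
  stmt4_general G a b hab c hac
end

section
/- Let G be a finite connected simple graph with at least two vertices and let x ≠ y be vertices of G. Let η denote the number of common neighbours of x and y. Then the Ollivier–Ricci curvature satisfies the upper bound κ(x,y) ≤ 1 − (1 − η/√(deg(x)·deg(y)))/d(x,y), where d(x,y) is the shortest-path distance between x and y. -/
/-!
STATEMENT 17: Let G be a finite connected simple graph with at least two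
vertices and let x ≠ y be vertices of G. Let η denote the number of common
neighbours of x and y. Then the Ollivier–Ricci curvature satisfies the upper
bound κ(x,y) ≤ 1 − (1 − η/√(deg(x)·deg(y)))/d(x,y), where d(x,y) is the
shortest-path distance between x and y.
-/
open Finset

variable {V : Type*}

/-- The number of common neighbours of two vertices. -/
def commonNbrs [Fintype V] [DecidableEq V] (G : SimpleGraph V)
    [DecidableRel G.Adj] (x y : V) : ℕ :=
  (G.neighborFinset x ∩ G.neighborFinset y).card

theorem stmt17 [Fintype V] [DecidableEq V] (G : SimpleGraph V)
    [DecidableRel G.Adj] (hconn : G.Connected) (hcard : 2 ≤ Fintype.card V)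
    (x y : V) (hxy : x ≠ y) :
    orc G x y ≤
      1 - (1 - (commonNbrs G x y : ℝ) /
            Real.sqrt ((G.degree x : ℝ) * (G.degree y : ℝ))) / (G.dist x y : ℝ) := by
  classical
  -- degrees are positive
  have hdeg : ∀ z : V, 0 < G.degree z := by
    intro z
    obtain ⟨v, hv⟩ := Fintype.exists_ne_of_one_lt_card (by omega) z
    obtain ⟨w⟩ := hconn.preconnected z v
    rw [SimpleGraph.degree_pos_iff_exists_adj]
    cases w with
    | nil => exact absurd rfl (Ne.symm hv)
    | cons h p => exact ⟨_, h⟩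
  have hdx : (0 : ℝ) < G.degree x := by exact_mod_cast hdeg x
  have hdy : (0 : ℝ) < G.degree y := by exact_mod_cast hdeg y
  have hdist : (0 : ℝ) < (G.dist x y : ℝ) := by
    exact_mod_cast hconn.pos_dist_of_ne hxy
  have hnm_nonneg : ∀ z u : V, 0 ≤ nbrMeasure G z u := by
    intro z u
    unfold nbrMeasure
    split <;> positivity
  -- sum of neighbour measures is 1
  have hsum : ∀ z : V, ∑ v, nbrMeasure G z v = 1 := by
    intro z
    have h1 : ∑ v, nbrMeasure G z v
        = ∑ v ∈ Finset.univ.filter (fun v => G.Adj z v), 1 / (G.degree z : ℝ) := by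
      rw [Finset.sum_filter]; rfl
    have h2 : Finset.univ.filter (fun v => G.Adj z v) = G.neighborFinset z := by
      ext v; simp [SimpleGraph.mem_neighborFinset]
    rw [h1, h2, Finset.sum_const, SimpleGraph.card_neighborFinset_eq_degree,
      nsmul_eq_mul]
    have : (G.degree z : ℝ) ≠ 0 := by exact_mod_cast (hdeg z).ne'
    field_simp
  set σ : ℝ := (commonNbrs G x y : ℝ) /
      Real.sqrt ((G.degree x : ℝ) * (G.degree y : ℝ)) with hσ
  -- key: every coupling cost is ≥ 1 - σ
  have hkey : ∀ ξ : V → V → ℝ, IsCoupling (nbrMeasure G x) (nbrMeasure G y) ξ →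
      1 - σ ≤ ∑ u, ∑ v, (G.dist u v : ℝ) * ξ u v := by
    rintro ξ ⟨hpos, hrow, hcol⟩
    have hdiag : ∀ u : V, ξ u u ≤ min (nbrMeasure G x u) (nbrMeasure G y u) := by
      intro u
      refine le_min ?_ ?_
      · rw [← hrow u]
        exact Finset.single_le_sum (fun v _ => hpos u v) (Finset.mem_univ u)
      · rw [← hcol u]
        exact Finset.single_le_sum (fun v _ => hpos v u) (Finset.mem_univ u)
    have hbound : ∀ u : V, ξ u u ≤
        if u ∈ G.neighborFinset x ∩ G.neighborFinset y then
          1 / Real.sqrt ((G.degree x : ℝ) * (G.degree y : ℝ)) else 0 := by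
      intro u
      by_cases hu : u ∈ G.neighborFinset x ∩ G.neighborFinset y
      · rw [if_pos hu]
        have hax : G.Adj x u := by
          have := (Finset.mem_inter.mp hu).1
          rwa [SimpleGraph.mem_neighborFinset] at this
        have hay : G.Adj y u := by
          have := (Finset.mem_inter.mp hu).2
          rwa [SimpleGraph.mem_neighborFinset] at this
        have h1 : min (nbrMeasure G x u) (nbrMeasure G y u)
            = min (1 / (G.degree x : ℝ)) (1 / (G.degree y : ℝ)) := by
          simp [nbrMeasure, hax, hay]
        refine (hdiag u).trans ?_
        rw [h1]
        have hmin : min (1 / (G.degree x : ℝ)) (1 / (G.degree y : ℝ)) ≤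
            Real.sqrt ((1 / (G.degree x : ℝ)) * (1 / (G.degree y : ℝ))) := by
          rcases le_total (1 / (G.degree x : ℝ)) (1 / (G.degree y : ℝ)) with h | h
          · rw [min_eq_left h]
            calc (1 / (G.degree x : ℝ))
                = Real.sqrt ((1 / (G.degree x : ℝ)) * (1 / (G.degree x : ℝ))) := by
                  rw [Real.sqrt_mul_self (by positivity)]
              _ ≤ _ := Real.sqrt_le_sqrt
                  (mul_le_mul_of_nonneg_left h (by positivity))
          · rw [min_eq_right h]
            calc (1 / (G.degree y : ℝ))
                = Real.sqrt ((1 / (G.degree y : ℝ)) * (1 / (G.degree y : ℝ))) := by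
                  rw [Real.sqrt_mul_self (by positivity)]
              _ ≤ _ := Real.sqrt_le_sqrt
                  (mul_le_mul_of_nonneg_right h (by positivity))
        refine hmin.trans_eq ?_
        rw [one_div_mul_one_div, one_div, one_div, Real.sqrt_inv]
      · rw [if_neg hu]
        have h0 : min (nbrMeasure G x u) (nbrMeasure G y u) ≤ 0 := by
          rw [Finset.mem_inter, not_and_or] at hu
          rcases hu with hu | hu
          · refine min_le_of_left_le ?_
            rw [SimpleGraph.mem_neighborFinset] at hu
            simp [nbrMeasure, hu]
          · refine min_le_of_right_le ?_
            rw [SimpleGraph.mem_neighborFinset] at hu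
            simp [nbrMeasure, hu]
        exact (hdiag u).trans h0
    have hsumdiag : ∑ u, ξ u u ≤ σ := by
      calc ∑ u, ξ u u
          ≤ ∑ u, (if u ∈ G.neighborFinset x ∩ G.neighborFinset y then
              1 / Real.sqrt ((G.degree x : ℝ) * (G.degree y : ℝ)) else 0) :=
            Finset.sum_le_sum (fun u _ => hbound u)
        _ = (commonNbrs G x y : ℝ) *
              (1 / Real.sqrt ((G.degree x : ℝ) * (G.degree y : ℝ))) := by
            rw [Finset.sum_ite_mem, Finset.univ_inter, Finset.sum_const,
              nsmul_eq_mul]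
            rfl
        _ = σ := by rw [hσ]; ring
    have hcost : ∑ u, ∑ v, (if u = v then (0:ℝ) else ξ u v) ≤
        ∑ u, ∑ v, (G.dist u v : ℝ) * ξ u v := by
      refine Finset.sum_le_sum fun u _ => Finset.sum_le_sum fun v _ => ?_
      by_cases huv : u = v
      · rw [if_pos huv]
        exact mul_nonneg (by positivity) (hpos u v)
      · rw [if_neg huv]
        have h1 : (1 : ℝ) ≤ (G.dist u v : ℝ) := by
          exact_mod_cast hconn.pos_dist_of_ne huv
        nlinarith [hpos u v]
    have heq : ∑ u, ∑ v, (if u = v then (0:ℝ) else ξ u v)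
        = 1 - ∑ u, ξ u u := by
      have hrow' : ∀ u : V, ∑ v, (if u = v then (0:ℝ) else ξ u v)
          = nbrMeasure G x u - ξ u u := by
        intro u
        have hterm : ∀ v : V, (if u = v then (0:ℝ) else ξ u v)
            = ξ u v - (if u = v then ξ u v else 0) := by
          intro v; split <;> simp
        rw [Finset.sum_congr rfl (fun v _ => hterm v), Finset.sum_sub_distrib,
          hrow u, Finset.sum_ite_eq, if_pos (Finset.mem_univ u)]
      rw [Finset.sum_congr rfl (fun u _ => hrow' u), Finset.sum_sub_distrib,
        hsum x]
    linarith [hcost, heq ▸ hcost]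
  -- W1 lower bound
  have hW1 : 1 - σ ≤
      W1 (fun u v => (G.dist u v : ℝ)) (nbrMeasure G x) (nbrMeasure G y) := by
    apply le_csInf
    · refine ⟨∑ u, ∑ v, (G.dist u v : ℝ) *
        (nbrMeasure G x u * nbrMeasure G y v),
        fun u v => nbrMeasure G x u * nbrMeasure G y v, ⟨?_, ?_, ?_⟩, rfl⟩
      · intro u v
        exact mul_nonneg (hnm_nonneg x u) (hnm_nonneg y v)
      · intro u
        rw [← Finset.mul_sum, hsum y, mul_one]
      · intro v
        rw [← Finset.sum_mul, hsum x, one_mul]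
    · rintro c ⟨ξ, hξ, rfl⟩
      exact hkey ξ hξ
  unfold orc
  have : (1 - σ) / (G.dist x y : ℝ) ≤
      W1 (fun u v => (G.dist u v : ℝ)) (nbrMeasure G x) (nbrMeasure G y) /
        (G.dist x y : ℝ) := by
    gcongr
  linarith
end

section
/- Let G be a finite connected simple graph with at least two vertices and let x ≠ y be vertices of G. Let η denote the number of common neighbours of x and y. Then the Wasserstein distance between the neighbour measures satisfies W1(μ_x, μ_y) ≤ (d(x,y) + 2)·(1 − η/max(deg(x), deg(y))), where d(x,y) is the shortest-path distance between x and y. -/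
/-!
STATEMENT 19: Let G be a finite connected simple graph with at least two
vertices and let x ≠ y be vertices of G. Let η denote the number of common
neighbours of x and y. Then the Wasserstein distance between the neighbour
measures satisfies W1(μ_x, μ_y) ≤ (d(x,y) + 2)·(1 − η/max(deg(x), deg(y))),
where d(x,y) is the shortest-path distance between x and y.
-/
open Finset

variable {V : Type*}

/-!
Keep mass `1/max(deg x, deg y)` in place on every common neighbour of `x` and `y`, at cost zero.
What remains on each side has total mass `1 - η/max(deg x, deg y)` and sits on neighbours of `x`,
respectively of `y`; any coupling of the remainders, e.g. the product one, moves it over distance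
at most `d(x,y) + 2`.
-/

section Coupling

variable [Fintype V]

def transportCost (d : V → V → ℝ) (ξ : V → V → ℝ) : ℝ :=
  ∑ u, ∑ v, d u v * ξ u v

theorem transportCost_add (d ξ ζ : V → V → ℝ) :
    transportCost d (ξ + ζ) = transportCost d ξ + transportCost d ζ := by
  simp only [transportCost, Pi.add_apply, mul_add, Finset.sum_add_distrib]

theorem W1_le_transportCost {d : V → V → ℝ} {μ ν : V → ℝ} {ξ : V → V → ℝ}
    (hd : ∀ u v, 0 ≤ d u v) (hξ : IsCoupling μ ν ξ) : W1 d μ ν ≤ transportCost d ξ := by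
  refine csInf_le ⟨0, ?_⟩ ⟨ξ, hξ, rfl⟩
  rintro c ⟨ζ, ⟨hζ, -, -⟩, rfl⟩
  exact Finset.sum_nonneg fun u _ => Finset.sum_nonneg fun v _ => mul_nonneg (hd u v) (hζ u v)

theorem IsCoupling.add {μ ν μ' ν' : V → ℝ} {ξ ζ : V → V → ℝ} (hξ : IsCoupling μ ν ξ)
    (hζ : IsCoupling μ' ν' ζ) : IsCoupling (μ + μ') (ν + ν') (ξ + ζ) := by
  refine ⟨fun u v => add_nonneg (hξ.1 u v) (hζ.1 u v), fun u => ?_, fun v => ?_⟩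
  · simp only [Pi.add_apply, Finset.sum_add_distrib, hξ.2.1, hζ.2.1]
  · simp only [Pi.add_apply, Finset.sum_add_distrib, hξ.2.2, hζ.2.2]

section Diagonal

variable [DecidableEq V]

def diagonalCoupling (κ : V → ℝ) : V → V → ℝ :=
  fun u v => if u = v then κ u else 0

theorem isCoupling_diagonalCoupling {κ : V → ℝ} (hκ : ∀ u, 0 ≤ κ u) :
    IsCoupling κ κ (diagonalCoupling κ) := by
  refine ⟨fun u v => ?_, fun u => ?_, fun v => ?_⟩
  · unfold diagonalCoupling
    split_ifs <;> simp [hκ]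
  · simp [diagonalCoupling]
  · simp [diagonalCoupling]

theorem transportCost_diagonalCoupling {d : V → V → ℝ} (hd : ∀ u, d u u = 0) (κ : V → ℝ) :
    transportCost d (diagonalCoupling κ) = 0 := by
  simp [transportCost, diagonalCoupling, hd]

end Diagonal

noncomputable def productCoupling (μ ν : V → ℝ) : V → V → ℝ :=
  fun u v => μ u * ν v / ∑ w, μ w

theorem isCoupling_productCoupling {μ ν : V → ℝ} (hμ : ∀ u, 0 ≤ μ u) (hν : ∀ v, 0 ≤ ν v)
    (hμν : ∑ u, μ u = ∑ v, ν v) : IsCoupling μ ν (productCoupling μ ν) := by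
  rcases eq_or_ne (∑ w, μ w) 0 with h0 | h0
  · have hμ0 : ∀ u, μ u = 0 := fun u =>
      (Finset.sum_eq_zero_iff_of_nonneg fun u _ => hμ u).mp h0 u (Finset.mem_univ u)
    have hν0 : ∀ v, ν v = 0 := fun v =>
      (Finset.sum_eq_zero_iff_of_nonneg fun v _ => hν v).mp (hμν ▸ h0) v (Finset.mem_univ v)
    refine ⟨fun u v => ?_, fun u => ?_, fun v => ?_⟩ <;> simp [productCoupling, hμ0, hν0]
  · refine ⟨fun u v => ?_, fun u => ?_, fun v => ?_⟩
    · exact div_nonneg (mul_nonneg (hμ u) (hν v)) (Finset.sum_nonneg fun w _ => hμ w)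
    · simp only [productCoupling]
      rw [← Finset.sum_div, ← Finset.mul_sum, ← hμν, mul_div_cancel_right₀ _ h0]
    · simp only [productCoupling]
      rw [← Finset.sum_div, ← Finset.sum_mul, mul_div_cancel_left₀ _ h0]

theorem transportCost_productCoupling_le {d : V → V → ℝ} {μ ν : V → ℝ} {D : ℝ}
    (hμ : ∀ u, 0 ≤ μ u) (hν : ∀ v, 0 ≤ ν v) (hμν : ∑ u, μ u = ∑ v, ν v)
    (hD : ∀ u v, 0 < μ u → 0 < ν v → d u v ≤ D) :
    transportCost d (productCoupling μ ν) ≤ D * ∑ u, μ u := by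
  have hξ := isCoupling_productCoupling hμ hν hμν
  have hterm : ∀ u v, d u v * productCoupling μ ν u v ≤ D * productCoupling μ ν u v := by
    intro u v
    rcases (hμ u).eq_or_lt with hu | hu
    · simp [productCoupling, ← hu]
    rcases (hν v).eq_or_lt with hv | hv
    · simp [productCoupling, ← hv]
    exact mul_le_mul_of_nonneg_right (hD u v hu hv) (hξ.1 u v)
  calc transportCost d (productCoupling μ ν)
      ≤ ∑ u, ∑ v, D * productCoupling μ ν u v :=
        Finset.sum_le_sum fun u _ => Finset.sum_le_sum fun v _ => hterm u v
    _ = D * ∑ u, μ u := by simp only [← Finset.mul_sum, hξ.2.1]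

theorem W1_le_of_common_mass [DecidableEq V] {d : V → V → ℝ} {μ ν κ : V → ℝ} {D : ℝ}
    (hd : ∀ u v, 0 ≤ d u v) (hd_self : ∀ u, d u u = 0) (hκ : ∀ u, 0 ≤ κ u)
    (hκμ : ∀ u, κ u ≤ μ u) (hκν : ∀ v, κ v ≤ ν v) (hμν : ∑ u, μ u = ∑ v, ν v)
    (hD : ∀ u v, κ u < μ u → κ v < ν v → d u v ≤ D) :
    W1 d μ ν ≤ D * (∑ u, μ u - ∑ u, κ u) := by
  have hsplit : ∀ ρ : V → ℝ, ρ = κ + (ρ - κ) := fun ρ => (add_sub_cancel κ ρ).symm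
  have hμκ : ∀ u, 0 ≤ (μ - κ) u := fun u => sub_nonneg.mpr (hκμ u)
  have hνκ : ∀ v, 0 ≤ (ν - κ) v := fun v => sub_nonneg.mpr (hκν v)
  have hrest : ∑ u, (μ - κ) u = ∑ v, (ν - κ) v := by
    simp only [Pi.sub_apply, Finset.sum_sub_distrib, hμν]
  have hcoupling := (isCoupling_diagonalCoupling hκ).add
    (isCoupling_productCoupling (μ := μ - κ) (ν := ν - κ) hμκ hνκ hrest)
  rw [← hsplit, ← hsplit] at hcoupling
  calc W1 d μ ν ≤ transportCost d (diagonalCoupling κ + productCoupling (μ - κ) (ν - κ)) :=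
        W1_le_transportCost hd hcoupling
    _ ≤ D * ∑ u, (μ - κ) u := by
        rw [transportCost_add, transportCost_diagonalCoupling hd_self, zero_add]
        exact transportCost_productCoupling_le hμκ hνκ hrest
          fun u v hu hv => hD u v (sub_pos.mp hu) (sub_pos.mp hv)
    _ = D * (∑ u, μ u - ∑ u, κ u) := by simp only [Pi.sub_apply, Finset.sum_sub_distrib]

end Coupling

namespace SimpleGraph

theorem Connected.dist_le_dist_add_two {G : SimpleGraph V} (hconn : G.Connected)
    {x y u v : V} (hxu : G.Adj x u) (hyv : G.Adj y v) : G.dist u v ≤ G.dist x y + 2 := by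
  have hdist_ux : G.dist u x = 1 := dist_eq_one_iff_adj.mpr hxu.symm
  have hdist_yv : G.dist y v = 1 := dist_eq_one_iff_adj.mpr hyv
  have := hconn.dist_triangle (u := u) (v := x) (w := v)
  have := hconn.dist_triangle (u := x) (v := y) (w := v)
  omega

variable [Fintype V] (G : SimpleGraph V) [DecidableRel G.Adj]

theorem nbrMeasure_nonneg (x u : V) : 0 ≤ nbrMeasure G x u := by
  unfold nbrMeasure
  split_ifs <;> positivity

theorem adj_of_nbrMeasure_pos {x u : V} (h : 0 < nbrMeasure G x u) : G.Adj x u := by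
  by_contra hxu
  simp [nbrMeasure, hxu] at h

theorem sum_nbrMeasure {x : V} (hx : 0 < G.degree x) : ∑ u, nbrMeasure G x u = 1 := by
  simp only [nbrMeasure]
  rw [← Finset.sum_filter, ← neighborFinset_eq_filter, Finset.sum_const,
    card_neighborFinset_eq_degree, nsmul_eq_mul, mul_one_div_cancel (by positivity)]

variable [DecidableEq V]

noncomputable def commonNbrMass (x y : V) : V → ℝ :=
  fun u => if u ∈ G.neighborFinset x ∩ G.neighborFinset y then
    1 / (max (G.degree x) (G.degree y) : ℝ) else 0

theorem commonNbrMass_comm (x y : V) : G.commonNbrMass x y = G.commonNbrMass y x := by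
  unfold commonNbrMass
  rw [Finset.inter_comm, max_comm]

theorem commonNbrMass_nonneg (x y u : V) : 0 ≤ G.commonNbrMass x y u := by
  unfold commonNbrMass
  split_ifs <;> positivity

theorem commonNbrMass_le_nbrMeasure (x y u : V) : G.commonNbrMass x y u ≤ nbrMeasure G x u := by
  unfold commonNbrMass
  split_ifs with hu
  · have hxu : G.Adj x u := (mem_neighborFinset G x u).mp (Finset.mem_inter.mp hu).1
    have hx : (0 : ℝ) < G.degree x := by exact_mod_cast hxu.degree_pos_left
    rw [nbrMeasure, if_pos hxu]
    exact one_div_le_one_div_of_le hx (le_max_left _ _)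
  · exact nbrMeasure_nonneg G x u

theorem sum_commonNbrMass (x y : V) :
    ∑ u, G.commonNbrMass x y u =
      (commonNbrs G x y : ℝ) / (max (G.degree x) (G.degree y) : ℝ) := by
  simp only [commonNbrMass]
  rw [Finset.sum_ite_mem, Finset.univ_inter, Finset.sum_const, nsmul_eq_mul,
    commonNbrs, mul_one_div]

end SimpleGraph

theorem stmt19_general [Fintype V] [DecidableEq V] (G : SimpleGraph V)
    [DecidableRel G.Adj] (hconn : G.Connected)
    (x y : V) (hxy : x ≠ y) :
    W1 (fun u v => (G.dist u v : ℝ)) (nbrMeasure G x) (nbrMeasure G y) ≤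
      ((G.dist x y : ℝ) + 2) *
        (1 - (commonNbrs G x y : ℝ) / (max (G.degree x) (G.degree y) : ℝ)) := by
  have hreach := hconn.preconnected x y
  have hx := hreach.degree_pos_left hxy
  have hy := hreach.degree_pos_right hxy
  have hκν : ∀ v, G.commonNbrMass x y v ≤ nbrMeasure G y v := by
    rw [G.commonNbrMass_comm]
    exact G.commonNbrMass_le_nbrMeasure y x
  have hsupport : ∀ u v, G.commonNbrMass x y u < nbrMeasure G x u →
      G.commonNbrMass x y v < nbrMeasure G y v → (G.dist u v : ℝ) ≤ G.dist x y + 2 := by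
    intro u v hu hv
    have hxu := G.adj_of_nbrMeasure_pos ((G.commonNbrMass_nonneg x y u).trans_lt hu)
    have hyv := G.adj_of_nbrMeasure_pos ((G.commonNbrMass_nonneg x y v).trans_lt hv)
    exact_mod_cast hconn.dist_le_dist_add_two hxu hyv
  rw [← G.sum_nbrMeasure hx, ← G.sum_commonNbrMass]
  exact W1_le_of_common_mass (fun u v => Nat.cast_nonneg _) (fun u => by simp)
    (G.commonNbrMass_nonneg x y) (G.commonNbrMass_le_nbrMeasure x y) hκν
    (by rw [G.sum_nbrMeasure hx, G.sum_nbrMeasure hy]) hsupport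

theorem stmt19 [Fintype V] [DecidableEq V] (G : SimpleGraph V)
    [DecidableRel G.Adj] (hconn : G.Connected) (hcard : 2 ≤ Fintype.card V)
    (x y : V) (hxy : x ≠ y) :
    W1 (fun u v => (G.dist u v : ℝ)) (nbrMeasure G x) (nbrMeasure G y) ≤
      ((G.dist x y : ℝ) + 2) *
        (1 - (commonNbrs G x y : ℝ) / (max (G.degree x) (G.degree y) : ℝ)) :=
  stmt19_general G hconn x y hxy
end
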